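/- Define N_γ(u) := p × γ(u) × γ'(u) (Lorentzian triple product), the unit normal field of the timelike conical surface ξ(u,v) := −N_γ(u), and κ_γ(u) := det(γ(u), γ'(u), γ''(u), p) (4×4 determinant with these rows). Then for all (u,v) with sin(v) ≠ 0: ⟨ξ(u,v), ξ(u,v)⟩ = 1; ξ(u,v) is ⟨,⟩-orthogonal to Φ(u,v), ∂Φ/∂u(u,v) and ∂Φ/∂v(u,v); ∂ξ/∂v(u,v) = 0; and ∂ξ/∂u(u,v) = −(κ_γ(u)/sin(v))·∂Φ/∂u(u,v). (Hence the Weingarten map of the cone has eigenvalues κ_γ(u)/sin(v) and 0, so the cone has Gaussian curvature K = 1 and mean curvature H = κ_γ(u)/(2 sin(v)).) -/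

import Mathlib

/-!
With `N = p × γ × γ'`, the vectors `p, γ, γ', N` form a pseudo-orthonormal frame of signature
`(+, +, -, +)`: orthogonality to `p, γ, γ'` is a determinant with a repeated row, and the Lorentzian
Lagrange identity `⟨x × y × z, x × y × z⟩ = -det (Gram x y z)` gives `⟨N, N⟩ = 1`. Since
`p × γ' × γ' = 0`, the product rule gives `N' = p × γ × γ''`. Differentiating the frame relations,
`γ''` is orthogonal to `p` and `γ'` with `⟨γ'', γ⟩ = 1`; pairing the rows `(w, p, γ, γ'')` against
`(N, p, γ, γ')` through `det A · det B = -det (A η Bᵀ)` then shows `p × γ × γ'' = κ_γ γ'`. Hence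
`∂ξ/∂u = -κ_γ γ' = -(κ_γ / sin v) ∂Φ/∂u`, while `ξ` does not depend on `v`.
-/

open Real

/-- The Minkowski scalar product on `ℝ⁴₁`:
`⟨x,y⟩ = -x₁y₁ + x₂y₂ + x₃y₃ + x₄y₄`. -/
noncomputable def mdot (x y : Fin 4 → ℝ) : ℝ :=
  -(x 0 * y 0) + x 1 * y 1 + x 2 * y 2 + x 3 * y 3

open Matrix

def minkowskiSign : Fin 4 → ℝ := ![-1, 1, 1, 1]

lemma mdot_comm (x y : Fin 4 → ℝ) : mdot x y = mdot y x := by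
  unfold mdot; ring

lemma isBilinearMap_mdot : IsBilinearMap ℝ mdot where
  add_left x x' y := by simp only [mdot, Pi.add_apply]; ring
  smul_left c x y := by simp only [mdot, Pi.smul_apply, smul_eq_mul]; ring
  add_right x y y' := by simp only [mdot, Pi.add_apply]; ring
  smul_right c x y := by simp only [mdot, Pi.smul_apply, smul_eq_mul]; ring

@[simp] lemma mdot_add_right (x y y' : Fin 4 → ℝ) : mdot x (y + y') = mdot x y + mdot x y' :=
  isBilinearMap_mdot.add_right x y y'

@[simp] lemma mdot_smul_right (c : ℝ) (x y : Fin 4 → ℝ) : mdot x (c • y) = c * mdot x y :=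
  isBilinearMap_mdot.smul_right c x y

@[simp] lemma mdot_neg_left (x y : Fin 4 → ℝ) : mdot (-x) y = -mdot x y := by
  simpa using isBilinearMap_mdot.smul_left (-1) x y

@[simp] lemma mdot_neg_right (x y : Fin 4 → ℝ) : mdot x (-y) = -mdot x y := by
  simpa using mdot_smul_right (-1) x y

@[simp] lemma mdot_zero_right (x : Fin 4 → ℝ) : mdot x 0 = 0 := by
  simpa using mdot_smul_right 0 x 0

lemma eq_of_forall_mdot_eq {a b : Fin 4 → ℝ} (h : ∀ w, mdot w a = mdot w b) : a = b := by
  funext i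
  have hi := h (Pi.single i 1)
  fin_cases i <;> simpa [mdot] using hi

lemma det_mul_det_eq_neg_det_mdot (a b : Fin 4 → Fin 4 → ℝ) :
    (of a).det * (of b).det = -(of fun i j => mdot (a i) (b j)).det := by
  have hgram : (of fun i j => mdot (a i) (b j)) = of a * diagonal minkowskiSign * (of b)ᵀ := by
    ext i j
    simp [mdot, mul_apply, Fin.sum_univ_four, minkowskiSign]
  rw [hgram, det_mul, det_mul, det_transpose, det_diagonal]
  simp [Fin.prod_univ_four, minkowskiSign]

lemma det_rotate_rows_two (x y z w : Fin 4 → ℝ) :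
    (of ![x, y, z, w]).det = (of ![z, w, x, y]).det := by
  simp [det_succ_row_zero, Fin.sum_univ_succ]
  simp [Fin.succAbove_of_castSucc_lt, Fin.succAbove_of_le_castSucc]
  ring

lemma hasDerivAt_mdot {f g : ℝ → Fin 4 → ℝ} {f' g' : Fin 4 → ℝ} {t : ℝ}
    (hf : HasDerivAt f f' t) (hg : HasDerivAt g g' t) :
    HasDerivAt (fun s => mdot (f s) (g s)) (mdot (f t) g' + mdot f' (g t)) t :=
  isBilinearMap_mdot.toContinuousBilinearMap.hasDerivAt_of_bilinear (fun _ => hf) (fun _ => hg)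

lemma mdot_add_mdot_eq_zero_of_hasDerivAt {f g : ℝ → Fin 4 → ℝ} {f' g' : Fin 4 → ℝ} {t c : ℝ}
    (hf : HasDerivAt f f' t) (hg : HasDerivAt g g' t) (hc : ∀ s, mdot (f s) (g s) = c) :
    mdot (f t) g' + mdot f' (g t) = 0 := by
  refine (hasDerivAt_mdot hf hg).unique ?_
  simpa only [hc] using hasDerivAt_const t c

noncomputable def lorentzTriple (x y z : Fin 4 → ℝ) : Fin 4 → ℝ :=
  fun i => minkowskiSign i * (of ![Pi.single i 1, x, y, z]).det

lemma mdot_lorentzTriple (w x y z : Fin 4 → ℝ) :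
    mdot w (lorentzTriple x y z) = (of ![w, x, y, z]).det := by
  simp [mdot, lorentzTriple, minkowskiSign, det_succ_row_zero, Fin.sum_univ_succ, Pi.single_apply]
  simp [Fin.succAbove_of_castSucc_lt, Fin.succAbove_of_le_castSucc]
  ring

lemma isBilinearMap_lorentzTriple (x : Fin 4 → ℝ) : IsBilinearMap ℝ (lorentzTriple x) := by
  constructor <;> intros <;> refine eq_of_forall_mdot_eq fun w => ?_ <;>
    simp [mdot_lorentzTriple, det_succ_row_zero, Fin.sum_univ_succ] <;>
    simp [Fin.succAbove_of_castSucc_lt, Fin.succAbove_of_le_castSucc] <;> ring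

lemma hasDerivAt_lorentzTriple (x : Fin 4 → ℝ) {f g : ℝ → Fin 4 → ℝ} {f' g' : Fin 4 → ℝ}
    {t : ℝ} (hf : HasDerivAt f f' t) (hg : HasDerivAt g g' t) :
    HasDerivAt (fun s => lorentzTriple x (f s) (g s))
      (lorentzTriple x (f t) g' + lorentzTriple x f' (g t)) t :=
  (isBilinearMap_lorentzTriple x).toContinuousBilinearMap.hasDerivAt_of_bilinear
    (fun _ => hf) (fun _ => hg)

lemma mdot_first_lorentzTriple (x y z : Fin 4 → ℝ) : mdot x (lorentzTriple x y z) = 0 := by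
  rw [mdot_lorentzTriple]; exact det_zero_of_row_eq (i := 0) (j := 1) (by decide) rfl

lemma mdot_second_lorentzTriple (x y z : Fin 4 → ℝ) : mdot y (lorentzTriple x y z) = 0 := by
  rw [mdot_lorentzTriple]; exact det_zero_of_row_eq (i := 0) (j := 2) (by decide) rfl

lemma mdot_third_lorentzTriple (x y z : Fin 4 → ℝ) : mdot z (lorentzTriple x y z) = 0 := by
  rw [mdot_lorentzTriple]; exact det_zero_of_row_eq (i := 0) (j := 3) (by decide) rfl

lemma lorentzTriple_self_right (x y : Fin 4 → ℝ) : lorentzTriple x y y = 0 :=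
  eq_of_forall_mdot_eq fun w => by
    rw [mdot_lorentzTriple, mdot_zero_right]
    exact det_zero_of_row_eq (i := 2) (j := 3) (by decide) rfl

lemma mdot_lorentzTriple_self (x y z : Fin 4 → ℝ) :
    mdot (lorentzTriple x y z) (lorentzTriple x y z) =
      -(of fun i j => mdot (![x, y, z] i) (![x, y, z] j)).det := by
  simp [mdot, lorentzTriple, minkowskiSign, det_succ_row_zero, Fin.sum_univ_succ, Pi.single_apply]
  simp [Fin.succAbove_of_castSucc_lt, Fin.succAbove_of_le_castSucc]
  ring

section Frame

variable {p a b : Fin 4 → ℝ}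

lemma mdot_lorentzTriple_self_of_orthonormal (hpp : mdot p p = 1) (haa : mdot a a = 1)
    (hbb : mdot b b = -1) (hap : mdot a p = 0) (hbp : mdot b p = 0) (hab : mdot a b = 0) :
    mdot (lorentzTriple p a b) (lorentzTriple p a b) = 1 := by
  have hpa : mdot p a = 0 := by rw [mdot_comm, hap]
  have hpb : mdot p b = 0 := by rw [mdot_comm, hbp]
  have hba : mdot b a = 0 := by rw [mdot_comm, hab]
  rw [mdot_lorentzTriple_self, det_fin_three]
  simp [hpp, haa, hbb, hap, hbp, hab, hpa, hpb, hba]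

lemma lorentzTriple_eq_smul_of_orthonormal {c : Fin 4 → ℝ} (hpp : mdot p p = 1)
    (haa : mdot a a = 1) (hbb : mdot b b = -1) (hap : mdot a p = 0) (hbp : mdot b p = 0)
    (hab : mdot a b = 0) (hcp : mdot c p = 0) (hca : mdot c a = 1) (hcb : mdot c b = 0) :
    lorentzTriple p a c = (of ![a, b, c, p]).det • b := by
  set N := lorentzTriple p a b
  have hN : (of ![N, p, a, b]).det = 1 := by
    rw [← mdot_lorentzTriple, mdot_lorentzTriple_self_of_orthonormal hpp haa hbb hap hbp hab]
  have hpa : mdot p a = 0 := by rw [mdot_comm, hap]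
  have hpb : mdot p b = 0 := by rw [mdot_comm, hbp]
  have hcN : mdot c N = (of ![a, b, c, p]).det := by rw [mdot_lorentzTriple, det_rotate_rows_two]
  refine eq_of_forall_mdot_eq fun w => ?_
  have hgram : (of fun i j => mdot (![w, p, a, c] i) (![N, p, a, b] j)) =
      !![mdot w N, mdot w p, mdot w a, mdot w b; 0, 1, 0, 0; 0, 0, 1, 0;
        (of ![a, b, c, p]).det, 0, 1, 0] := by
    ext i j
    fin_cases i <;> fin_cases j <;>
      simp [hpp, haa, hap, hab, hpa, hpb, hcp, hca, hcb, hcN, mdot_first_lorentzTriple,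
        mdot_second_lorentzTriple, N]
  rw [mdot_lorentzTriple, mdot_smul_right, ← mul_one (det _), ← hN, det_mul_det_eq_neg_det_mdot,
    hgram]
  simp [det_succ_row_zero, Fin.sum_univ_succ]
  simp [Fin.succAbove_of_castSucc_lt, Fin.succAbove_of_le_castSucc]
  ring

end Frame

section Curve

variable {γ : ℝ → Fin 4 → ℝ}

lemma mdot_deriv_eq_zero_of_mdot_eq_const (hγ : Differentiable ℝ γ) {q : Fin 4 → ℝ} {c : ℝ}
    (hc : ∀ t, mdot (γ t) q = c) (t : ℝ) : mdot (deriv γ t) q = 0 := by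
  simpa using mdot_add_mdot_eq_zero_of_hasDerivAt (hγ t).hasDerivAt (hasDerivAt_const t q) hc

lemma mdot_deriv_eq_zero_of_mdot_self_eq_const (hγ : Differentiable ℝ γ) {c : ℝ}
    (hc : ∀ t, mdot (γ t) (γ t) = c) (t : ℝ) : mdot (γ t) (deriv γ t) = 0 := by
  have h := mdot_add_mdot_eq_zero_of_hasDerivAt (hγ t).hasDerivAt (hγ t).hasDerivAt hc
  rw [mdot_comm (deriv γ t)] at h
  linarith

lemma hasDerivAt_lorentzTriple_deriv {p : Fin 4 → ℝ} (hγ : Differentiable ℝ γ)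
    (hγ' : Differentiable ℝ (deriv γ)) (hpp : mdot p p = 1) (hγγ : ∀ t, mdot (γ t) (γ t) = 1)
    (hγp : ∀ t, mdot (γ t) p = 0) (hγ'γ' : ∀ t, mdot (deriv γ t) (deriv γ t) = -1)
    (hγ'p : ∀ t, mdot (deriv γ t) p = 0) (hγγ' : ∀ t, mdot (γ t) (deriv γ t) = 0) (u : ℝ) :
    HasDerivAt (fun t => lorentzTriple p (γ t) (deriv γ t))
      ((of ![γ u, deriv γ u, deriv (deriv γ) u, p]).det • deriv γ u) u := by
  have hγ''p := mdot_deriv_eq_zero_of_mdot_eq_const hγ' hγ'p u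
  have hγ''γ' : mdot (deriv (deriv γ) u) (deriv γ u) = 0 := by
    rw [mdot_comm]; exact mdot_deriv_eq_zero_of_mdot_self_eq_const hγ' hγ'γ' u
  have hγ''γ : mdot (deriv (deriv γ) u) (γ u) = 1 := by
    have h := mdot_add_mdot_eq_zero_of_hasDerivAt (hγ u).hasDerivAt (hγ' u).hasDerivAt hγγ'
    rw [mdot_comm, hγ'γ'] at h
    linarith
  have h := hasDerivAt_lorentzTriple p (hγ u).hasDerivAt (hγ' u).hasDerivAt
  rwa [lorentzTriple_self_right, add_zero, lorentzTriple_eq_smul_of_orthonormal hpp (hγγ u)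
    (hγ'γ' u) (hγp u) (hγ'p u) (hγγ' u) hγ''p hγ''γ hγ''γ'] at h

end Curve

/-- Properties of the unit normal `ξ(u,v) = -N_γ(u)` of the timelike conical
surface `Φ(u,v) = cos v • p + sin v • γ(u)`, where `N_γ(u) = p × γ(u) × γ'(u)`. -/
theorem cone_normal_properties
    (p : Fin 4 → ℝ) (hp : mdot p p = 1)
    (γ : ℝ → Fin 4 → ℝ) (hγsm : ContDiff ℝ (⊤ : ℕ∞) γ)
    (hγ1 : ∀ u, mdot (γ u) (γ u) = 1)
    (hγp : ∀ u, mdot (γ u) p = 0)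
    (hγ' : ∀ u, mdot (deriv γ u) (deriv γ u) = -1)
    (Φ : ℝ → ℝ → Fin 4 → ℝ)
    (hΦ : ∀ u v, Φ u v = Real.cos v • p + Real.sin v • γ u)
    (Nγ : ℝ → Fin 4 → ℝ)
    (hNγ : ∀ u x, mdot x (Nγ u) = (Matrix.of ![x, p, γ u, deriv γ u]).det)
    (ξ : ℝ → ℝ → Fin 4 → ℝ) (hξ : ∀ u v, ξ u v = -Nγ u)
    (κγ : ℝ → ℝ)
    (hκγ : ∀ u, κγ u = (Matrix.of ![γ u, deriv γ u, deriv (deriv γ) u, p]).det) :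
    ∀ u v, Real.sin v ≠ 0 →
      mdot (ξ u v) (ξ u v) = 1 ∧
      mdot (ξ u v) (Φ u v) = 0 ∧
      mdot (ξ u v) (deriv (fun u' => Φ u' v) u) = 0 ∧
      mdot (ξ u v) (deriv (fun v' => Φ u v') v) = 0 ∧
      deriv (fun v' => ξ u v') v = 0 ∧
      deriv (fun u' => ξ u' v) u
        = -(κγ u / Real.sin v) • deriv (fun u' => Φ u' v) u := by
  intro u v hv
  have hγd : Differentiable ℝ γ := hγsm.differentiable (by simp)
  have hγd' : Differentiable ℝ (deriv γ) :=
    (contDiff_infty_iff_deriv.mp hγsm).2.differentiable (by simp)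
  have hγ'p := mdot_deriv_eq_zero_of_mdot_eq_const hγd hγp
  have hγγ' := mdot_deriv_eq_zero_of_mdot_self_eq_const hγd hγ1
  have hN : ∀ t, Nγ t = lorentzTriple p (γ t) (deriv γ t) := fun t =>
    eq_of_forall_mdot_eq fun w => by rw [hNγ, mdot_lorentzTriple]
  have hΦu : HasDerivAt (fun u' => Φ u' v) (sin v • deriv γ u) u := by
    simp only [hΦ]; exact ((hγd u).hasDerivAt.const_smul (sin v)).const_add _
  have hΦv : HasDerivAt (fun v' => Φ u v') (-sin v • p + cos v • γ u) v := by
    simp only [hΦ]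
    exact ((hasDerivAt_cos v).smul_const p).add ((hasDerivAt_sin v).smul_const (γ u))
  have hξu : HasDerivAt (fun u' => ξ u' v) (-(κγ u • deriv γ u)) u := by
    simp only [hξ, hN, hκγ]
    exact (hasDerivAt_lorentzTriple_deriv hγd hγd' hp hγ1 hγp hγ' hγ'p hγγ' u).neg
  rw [hΦu.deriv, hΦv.deriv, hξu.deriv]
  simp only [hξ, hN, hΦ]
  refine ⟨?_, ?_, ?_, ?_, ?_, ?_⟩
  · rw [mdot_neg_left, mdot_neg_right, neg_neg]
    exact mdot_lorentzTriple_self_of_orthonormal hp (hγ1 u) (hγ' u) (hγp u) (hγ'p u) (hγγ' u)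
  · simp [mdot_comm _ p, mdot_comm _ (γ u), mdot_first_lorentzTriple, mdot_second_lorentzTriple]
  · simp [mdot_comm _ (deriv γ u), mdot_third_lorentzTriple]
  · simp [mdot_comm _ p, mdot_comm _ (γ u), mdot_first_lorentzTriple, mdot_second_lorentzTriple]
  · exact deriv_const _ _
  · rw [smul_smul, neg_mul, div_mul_cancel₀ _ hv, neg_smul]
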